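/- arXiv:2307.05160 — 3 statements merged into one kernel-verified Lean document; each statement's English description precedes it below -/
import Mathlib

section
/- Let a > −1 and ε ≥ 0 be real and L ≥ 2 an integer. Then: (i) for every k ∈ ℕ, the rational function g_k(·; a, ε, L) belongs to F(ε,L); moreover for k ≥ 1 its singularities are simple poles contained in {±A_1,…,±A_k} and its residue at ±A_k is nonzero; (ii) every φ ∈ F(ε,L) can be written in a unique way as a finite linear combination φ = Σ_{k≥0} c_k·g_k(·; a, ε, L) with complex coefficients c_k, only finitely many nonzero; that is, the family {g_k(·; a, ε, L) : k ∈ ℕ} is a basis of the complex vector space F(ε,L). -/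
open Finset

/-- Pochhammer symbol over `ℂ`. -/
noncomputable def pochC (x : ℂ) (n : ℕ) : ℂ := (ascPochhammer ℂ n).eval x

/-- `g_k(t; a, ε, L)`, the terminating ₄F₃-type series. -/
noncomputable def gfun (a eps : ℝ) (L k : ℕ) (t : ℂ) : ℂ :=
  ∑ n ∈ Finset.range (k+1),
    (pochC (-(k:ℂ)) n * pochC ((k:ℂ) + 2*(eps:ℂ)) n * pochC (L:ℂ) n * pochC ((L:ℂ) + (a:ℂ)) n) /
    (pochC (-t + (L:ℂ) + (eps:ℂ)) n * pochC (t + (L:ℂ) + (eps:ℂ)) n * pochC ((a:ℂ)+1) n *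
      (Nat.factorial n : ℂ))

/-- `e_0 ≡ 1` and, for `m ≥ 1`, `e_m(t) = 1/(t−A_m) − 1/(t+A_m)` with `A_m = L+ε+m−1`. -/
noncomputable def efun (eps : ℝ) (L m : ℕ) (t : ℂ) : ℂ :=
  if m = 0 then 1
  else 1/(t - ((L:ℂ) + (eps:ℂ) + (m:ℂ) - 1)) - 1/(t + ((L:ℂ) + (eps:ℂ) + (m:ℂ) - 1))

/-- `t` avoids all the points `±A_m = ±(L+ε+m−1)`, `m ≥ 1`. -/
def Adm (eps : ℝ) (L : ℕ) (t : ℂ) : Prop :=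
  ∀ m : ℕ, t^2 ≠ ((L:ℂ) + (eps:ℂ) + (m:ℂ))^2

/-- Membership in the space `F(ε,L)`: even rational functions regular at `∞` whose only
singularities are simple poles contained in `{±A_m : m ≥ 1}`; such functions are exactly
the finite linear combinations `c₀ + Σ_{m≥1} r_m (1/(t−A_m) − 1/(t+A_m))`
(partial-fraction expansion), where `r_m` is the residue at `A_m`. -/
def InF (eps : ℝ) (L : ℕ) (φ : ℂ → ℂ) : Prop :=
  ∃ r : ℕ → ℂ, (Function.support r).Finite ∧
    ∀ t : ℂ, Adm eps L t → φ t = ∑ᶠ m : ℕ, r m * efun eps L m t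

/-!
Write `A_{j+1} = L + ε + j` and `u_n(t) = 1 / ∏_{j<n} (t² - A_{j+1}²)`. Since
`(-t+L+ε)_n (t+L+ε)_n = (-1)^n / u_n(t)`, the function `g_k` is a combination of `u_0, …, u_k`
whose coefficient of `u_k` is a product of nonvanishing Pochhammer symbols. By partial fractions
`u_n` is a combination of `e_0, …, e_n`, where `e_m(t) = 1/(t-A_m) - 1/(t+A_m) = 2A_m/(t²-A_m²)`,
with nonzero coefficient of `e_n`. Hence the `g_k` are triangular over the `e_m` with invertible
diagonal, which gives the expansion of `g_k` and its nonzero residue at `±A_k`. The `e_m` are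
linearly independent on the admissible points (clearing denominators gives a polynomial in `t²`
with infinitely many roots), so the triangular family `g_k` is independent as well and spans the
same space as the `e_m`, namely `F(ε,L)`.
-/

open Set Submodule in
def IsTriangular (K : Type*) {M ι : Type*} [Field K] [AddCommGroup M] [Module K M] [Preorder ι]
    (e g : ι → M) : Prop :=
  ∀ k, ∃ c : K, c ≠ 0 ∧ g k - c • e k ∈ span K (e '' Iio k)

section Triangular

open Set Submodule

variable {K M ι : Type*} [Field K] [AddCommGroup M] [Module K M]

theorem linearIndependent_of_notMem_span_image_Iio [LinearOrder ι] {v : ι → M}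
    (hv : ∀ k, v k ∉ span K (v '' Iio k)) : LinearIndependent K v := by
  classical
  rw [linearIndependent_iff']
  intro s
  induction s using Finset.induction_on_max with
  | empty => simp
  | insert k s hlt ih =>
    intro d hsum i hi
    rw [sum_insert fun hk => lt_irrefl k (hlt k hk)] at hsum
    have hdk : d k = 0 := by
      by_contra hdk
      refine hv k ((smul_mem_iff _ hdk).mp ?_)
      rw [eq_neg_of_add_eq_zero_left hsum]
      exact neg_mem (sum_mem fun j hj => smul_mem _ _ (subset_span (mem_image_of_mem v (hlt j hj))))
    rw [hdk, zero_smul, zero_add] at hsum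
    rcases Finset.mem_insert.mp hi with rfl | hi
    · exact hdk
    · exact ih d hsum i hi

theorem IsTriangular.of_eq_sum_range {e g : ℕ → M}
    (h : ∀ k, ∃ a : ℕ → K, a k ≠ 0 ∧ g k = ∑ m ∈ range (k + 1), a m • e m) :
    IsTriangular K e g := fun k => by
  obtain ⟨a, hak, hg⟩ := h k
  refine ⟨a k, hak, ?_⟩
  rw [hg, sum_range_succ, add_sub_cancel_right]
  exact sum_mem fun m hm => smul_mem _ _ (subset_span (mem_image_of_mem e (mem_range.mp hm)))

namespace IsTriangular

section Preorder

variable [Preorder ι] {e g u : ι → M}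

theorem mem_span_image_Iic (h : IsTriangular K e g) (k : ι) : g k ∈ span K (e '' Iic k) := by
  obtain ⟨c, -, hk⟩ := h k
  simpa using add_mem (span_mono (image_mono Set.Iio_subset_Iic_self) hk)
    (smul_mem _ c (subset_span (mem_image_of_mem e (Set.mem_Iic.mpr le_rfl))))

theorem span_image_Iio_le (h : IsTriangular K e g) (k : ι) :
    span K (g '' Iio k) ≤ span K (e '' Iio k) :=
  span_le.mpr <| by
    rintro _ ⟨j, hj, rfl⟩
    exact span_mono (image_mono (Iic_subset_Iio.mpr hj)) (h.mem_span_image_Iic j)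

theorem trans (hgu : IsTriangular K u g) (hue : IsTriangular K e u) : IsTriangular K e g :=
  fun k => by
    obtain ⟨c, hc, hgk⟩ := hgu k
    obtain ⟨d, hd, huk⟩ := hue k
    refine ⟨c * d, mul_ne_zero hc hd, ?_⟩
    have hsplit : g k - (c * d) • e k = (g k - c • u k) + c • (u k - d • e k) := by
      rw [smul_sub, mul_smul]; abel
    rw [hsplit]
    exact add_mem (hue.span_image_Iio_le k hgk) (smul_mem _ c huk)

theorem span_range_le [WellFoundedLT ι] (h : IsTriangular K e g) :
    span K (range e) ≤ span K (range g) := by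
  refine span_le.mpr ?_
  rintro _ ⟨k, rfl⟩
  induction k using WellFoundedLT.induction with
  | _ k ih =>
    obtain ⟨c, hc, hk⟩ := h k
    have hlow : span K (e '' Iio k) ≤ span K (range g) :=
      span_le.mpr <| by rintro _ ⟨j, hj, rfl⟩; exact ih j hj
    rw [SetLike.mem_coe, ← smul_mem_iff _ hc, ← sub_sub_cancel (g k) (c • e k)]
    exact sub_mem (subset_span (mem_range_self k)) (hlow hk)

end Preorder

variable [LinearOrder ι] {e g : ι → M}

theorem linearIndependent (h : IsTriangular K e g) (he : LinearIndependent K e) :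
    LinearIndependent K g :=
  linearIndependent_of_notMem_span_image_Iio fun k hk => by
    obtain ⟨c, hc, hgk⟩ := h k
    refine he.notMem_span_image (s := Iio k) (lt_irrefl k) ((smul_mem_iff _ hc).mp ?_)
    simpa using sub_mem (h.span_image_Iio_le k hk) hgk

theorem exists_finsupp (h : IsTriangular K e g) (k : ι) :
    ∃ l : ι →₀ K, (∀ m, k < m → l m = 0) ∧ l k ≠ 0 ∧ Finsupp.linearCombination K e l = g k := by
  obtain ⟨c, hc, hgk⟩ := h k
  obtain ⟨l, hl, hle⟩ := (Finsupp.mem_span_image_iff_linearCombination K).mp hgk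
  have hl_ge : ∀ m, k ≤ m → l m = 0 := fun m hm =>
    Finsupp.notMem_support_iff.mp fun hmem => not_lt.mpr hm (hl hmem)
  refine ⟨l + Finsupp.single k c, fun m hm => ?_, ?_, ?_⟩
  · simp [hl_ge m hm.le, Finsupp.single_eq_of_ne hm.ne']
  · simpa [hl_ge k le_rfl] using hc
  · rw [map_add, hle, Finsupp.linearCombination_single, sub_add_cancel]

end IsTriangular

end Triangular

section Restrict

open Set Submodule

variable {K ι X : Type*} [Field K]

theorem Finsupp.linearCombination_domRestrict_eq_iff {S : Set X} {v : ι → X → K} {f : X → K}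
    (l : ι →₀ K) :
    linearCombination K (fun i => S.domRestrict (v i)) l = S.domRestrict f ↔
      ∀ x ∈ S, f x = ∑ᶠ i, l i * v i x := by
  have hsupp (x : S) : (Function.support fun i => l i * v i x) ⊆ l.support := fun i hi =>
    Finsupp.mem_support_iff.mpr (left_ne_zero_of_mul hi)
  simp only [funext_iff, Subtype.forall, linearCombination_apply, Finsupp.sum, Finset.sum_apply,
    Pi.smul_apply, smul_eq_mul]
  refine forall₂_congr fun x hx => ?_
  rw [finsum_eq_sum_of_support_subset _ (hsupp ⟨x, hx⟩), eq_comm]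
  rfl

theorem domRestrict_mem_span_of_eq_finsum {S : Set X} {v : ι → X → K} {f : X → K} {r : ι → K}
    (hr : r.support.Finite) (h : ∀ x ∈ S, f x = ∑ᶠ i, r i * v i x) :
    S.domRestrict f ∈ span K (range fun i => S.domRestrict (v i)) := by
  rw [← Finsupp.range_linearCombination]
  exact ⟨.ofSupportFinite r hr, (Finsupp.linearCombination_domRestrict_eq_iff _).mpr h⟩

theorem LinearIndependent.existsUnique_finsum {S : Set X} {v : ι → X → K}
    (hv : LinearIndependent K fun i => S.domRestrict (v i)) {f : X → K}
    (hf : S.domRestrict f ∈ span K (range fun i => S.domRestrict (v i))) :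
    ∃! c : ι → K, c.support.Finite ∧ ∀ x ∈ S, f x = ∑ᶠ i, c i * v i x := by
  rw [← Finsupp.range_linearCombination] at hf
  obtain ⟨l, hl⟩ := hf
  refine ⟨l, ⟨l.hasFiniteSupport, (Finsupp.linearCombination_domRestrict_eq_iff l).mp hl⟩, ?_⟩
  rintro c ⟨hc, hcf⟩
  have hcl := congrArg DFunLike.coe <|
    hv (((Finsupp.linearCombination_domRestrict_eq_iff (.ofSupportFinite c hc)).mpr hcf).trans
      hl.symm)
  rwa [Finsupp.ofSupportFinite_coe] at hcl

theorem IsTriangular.exists_finsum [LinearOrder ι] {S : Set X} {v w : ι → X → K}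
    (h : IsTriangular K (fun i => S.domRestrict (v i)) fun i => S.domRestrict (w i)) (k : ι) :
    ∃ r : ι → K, (∀ m, k < m → r m = 0) ∧ r k ≠ 0 ∧ r.support.Finite ∧
      ∀ x ∈ S, w k x = ∑ᶠ m, r m * v m x := by
  obtain ⟨l, hgt, hk, hl⟩ := h.exists_finsupp k
  exact ⟨l, hgt, hk, l.hasFiniteSupport, (Finsupp.linearCombination_domRestrict_eq_iff l).mp hl⟩

end Restrict

namespace Lagrange

open Polynomial

variable {F ι : Type*} [Field F] [DecidableEq ι] {s : Finset ι} {v : ι → F}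

theorem inv_prod_sub_eq_sum (hvs : Set.InjOn v s) (hs : s.Nonempty) {x : F}
    (hx : ∀ i ∈ s, x ≠ v i) :
    (∏ i ∈ s, (x - v i))⁻¹ = ∑ i ∈ s, nodalWeight s v i * (x - v i)⁻¹ := by
  have h := eval_interpolate_not_at_node 1 hx
  simp only [interpolate_one hvs hs, eval_one, eval_nodal, Pi.one_apply, mul_one] at h
  exact inv_eq_of_mul_eq_one_right h.symm

theorem eq_zero_of_forall_add_sum_mul_inv_sub_eq_zero (hvs : Set.InjOn v s) {T : Set F}
    (hT : T.Infinite) (hTv : ∀ x ∈ T, ∀ i ∈ s, x ≠ v i) {c : F} {r : ι → F}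
    (h : ∀ x ∈ T, c + ∑ i ∈ s, r i * (x - v i)⁻¹ = 0) : c = 0 ∧ ∀ i ∈ s, r i = 0 := by
  -- Clearing denominators gives a polynomial vanishing on `T`; its value at the node `v i` is
  -- `r i` times a nonzero number.
  set P := C c * nodal s v + ∑ i ∈ s, C (r i) * nodal (s.erase i) v
  have hP : P = 0 := by
    refine eq_zero_of_infinite_isRoot P (hT.mono fun x hx => ?_)
    have hxP : eval x P = (c + ∑ i ∈ s, r i * (x - v i)⁻¹) * eval x (nodal s v) := by
      simp only [P, eval_add, eval_mul, eval_C, eval_finsetSum, add_mul, sum_mul]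
      refine congrArg _ (sum_congr rfl fun i hi => ?_)
      rw [eval_nodal, eval_nodal, ← mul_prod_erase s _ hi, ← mul_assoc, mul_assoc (r i),
        inv_mul_cancel₀ (sub_ne_zero.mpr (hTv x hx i hi)), mul_one]
    change eval x P = 0
    rw [hxP, h x hx, zero_mul]
  have hr : ∀ i ∈ s, r i = 0 := by
    intro i hi
    have h0 := congrArg (eval (v i)) hP
    simp only [P, eval_zero, eval_add, eval_mul, eval_C, eval_finsetSum, eval_nodal_at_node hi,
      mul_zero, zero_add] at h0
    rw [sum_eq_single i (fun j hj hji => by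
        rw [eval_nodal_at_node (mem_erase.mpr ⟨Ne.symm hji, hi⟩), mul_zero])
      (absurd hi)] at h0
    refine (mul_eq_zero.mp h0).resolve_right (eval_nodal_not_at_node fun j hj => ?_)
    exact fun hij => (mem_erase.mp hj).1 (hvs (mem_of_mem_erase hj) hi hij.symm)
  obtain ⟨x, hx⟩ := hT.nonempty
  have hsum : ∑ i ∈ s, r i * (x - v i)⁻¹ = 0 := sum_eq_zero fun i hi => by rw [hr i hi, zero_mul]
  exact ⟨by simpa [hsum] using h x hx, hr⟩

end Lagrange

section Poles

variable {eps : ℝ} {L : ℕ}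

-- `pole eps L j` is the point `A_{j+1}`; `Adm eps L t` says `t² ≠ pole eps L j ^ 2` for all `j`.
noncomputable def pole (eps : ℝ) (L j : ℕ) : ℂ := (L : ℂ) + eps + j

theorem pole_eq_ofReal (eps : ℝ) (L j : ℕ) : pole eps L j = ((L + eps + j : ℝ) : ℂ) := by
  simp [pole]

theorem pole_ne_zero (hα : 0 < (L : ℝ) + eps) (j : ℕ) : pole eps L j ≠ 0 := by
  rw [pole_eq_ofReal, Complex.ofReal_ne_zero]
  positivity

theorem pole_sq_injective (hα : 0 < (L : ℝ) + eps) :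
    Function.Injective fun j => pole eps L j ^ 2 := by
  intro i j h
  simp only [pole_eq_ofReal, ← Complex.ofReal_pow, Complex.ofReal_inj] at h
  have := (sq_eq_sq₀ (by positivity) (by positivity)).mp h
  exact_mod_cast (by linarith : (i : ℝ) = j)

theorem adm_natCast_mul_I (hα : 0 < (L : ℝ) + eps) (n : ℕ) : Adm eps L (n * Complex.I) := by
  intro j h
  rw [mul_pow, Complex.I_sq] at h
  have hre : ((-(n : ℝ) ^ 2 : ℝ) : ℂ) = (((L + eps + j) ^ 2 : ℝ) : ℂ) := by
    push_cast
    linear_combination h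
  have : 0 < ((L : ℝ) + eps + j) ^ 2 := by positivity
  nlinarith [Complex.ofReal_inj.mp hre]

theorem efun_succ {t : ℂ} (j : ℕ) (ht : t ^ 2 ≠ pole eps L j ^ 2) :
    efun eps L (j + 1) t = 2 * pole eps L j * (t ^ 2 - pole eps L j ^ 2)⁻¹ := by
  have h1 : t - pole eps L j ≠ 0 := fun h => ht (by rw [sub_eq_zero.mp h])
  have h2 : t + pole eps L j ≠ 0 := fun h => ht (by rw [eq_neg_of_add_eq_zero_left h]; ring)
  rw [efun, if_neg j.succ_ne_zero,
    show (L : ℂ) + eps + ((j + 1 : ℕ) : ℂ) - 1 = pole eps L j by push_cast [pole]; ring]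
  field_simp
  ring

theorem linearIndependent_efun (hα : 0 < (L : ℝ) + eps) :
    LinearIndependent ℂ fun m => {t | Adm eps L t}.domRestrict (efun eps L m) := by
  rw [linearIndependent_iff'']
  intro s g hg hsum
  obtain ⟨N, hN⟩ : ∃ N, s ⊆ range (N + 1) :=
    ⟨s.sup id, fun i hi => mem_range.mpr (Nat.lt_succ_of_le (le_sup (f := id) hi))⟩
  have hT_inj : Function.Injective fun n : ℕ => ((n : ℂ) * Complex.I) ^ 2 := fun m n h => by
    have hmn : (m : ℂ) ^ 2 = n ^ 2 := by simpa [mul_pow] using h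
    exact Nat.pow_left_injective two_ne_zero (by exact_mod_cast hmn)
  have hT : ∀ x ∈ Set.range fun n : ℕ => ((n : ℂ) * Complex.I) ^ 2,
      g 0 + ∑ j ∈ range N, g (j + 1) * (2 * pole eps L j) * (x - pole eps L j ^ 2)⁻¹ = 0 := by
    rintro _ ⟨n, rfl⟩
    have ht := adm_natCast_mul_I hα n
    have := congrFun hsum ⟨_, ht⟩
    rw [sum_subset hN fun i _ hi => by rw [hg i hi, zero_smul], sum_range_succ'] at this
    have he0 : efun eps L 0 (n * Complex.I) = 1 := if_pos rfl
    have he : ∀ j, efun eps L (j + 1) (n * Complex.I) = _ := fun j => efun_succ j (ht j)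
    simp only [Finset.sum_apply, Pi.add_apply, Pi.smul_apply, Pi.zero_apply, smul_eq_mul,
      Set.domRestrict_apply, he0, he, mul_one] at this
    rw [add_comm] at this
    simpa only [mul_assoc] using this
  obtain ⟨h0, hsucc⟩ := Lagrange.eq_zero_of_forall_add_sum_mul_inv_sub_eq_zero
    (pole_sq_injective hα).injOn (Set.infinite_range_of_injective hT_inj)
    (by rintro _ ⟨n, rfl⟩ j -; exact adm_natCast_mul_I hα n j) hT
  rintro (_ | j)
  · exact h0
  · by_cases hj : j < N
    · exact (mul_eq_zero.mp (hsucc j (mem_range.mpr hj))).resolve_right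
        (mul_ne_zero two_ne_zero (pole_ne_zero hα j))
    · exact hg _ fun hs => hj (by simpa using mem_range.mp (hN hs))

end Poles

noncomputable def nodalInv (eps : ℝ) (L n : ℕ) (t : ℂ) : ℂ :=
  (∏ j ∈ range n, (t ^ 2 - pole eps L j ^ 2))⁻¹

section Expansions

open Lagrange

variable {a eps : ℝ} {L : ℕ}

theorem nodalInv_succ_eq_sum (hα : 0 < (L : ℝ) + eps) {t : ℂ} (ht : Adm eps L t) (n : ℕ) :
    nodalInv eps L (n + 1) t = ∑ j ∈ range (n + 1),
      nodalWeight (range (n + 1)) (fun j => pole eps L j ^ 2) j * (2 * pole eps L j)⁻¹ *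
        efun eps L (j + 1) t := by
  rw [nodalInv, inv_prod_sub_eq_sum (pole_sq_injective hα).injOn nonempty_range_add_one
    fun j _ => ht j]
  refine sum_congr rfl fun j _ => ?_
  rw [efun_succ j (ht j), mul_assoc,
    inv_mul_cancel_left₀ (mul_ne_zero two_ne_zero (pole_ne_zero hα j))]

theorem isTriangular_efun_nodalInv (hα : 0 < (L : ℝ) + eps) :
    IsTriangular ℂ (fun m => {t | Adm eps L t}.domRestrict (efun eps L m))
      (fun n => {t | Adm eps L t}.domRestrict (nodalInv eps L n)) := by
  refine IsTriangular.of_eq_sum_range fun n => ?_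
  cases n with
  | zero => exact ⟨1, one_ne_zero, funext fun t => by simp [nodalInv, efun]⟩
  | succ n =>
    refine ⟨fun m => if m = 0 then 0 else
      nodalWeight (range (n + 1)) (fun j => pole eps L j ^ 2) (m - 1) * (2 * pole eps L (m - 1))⁻¹,
      ?_, funext fun t => ?_⟩
    · simpa using ⟨nodalWeight_ne_zero (pole_sq_injective hα).injOn (self_mem_range_succ n),
        pole_ne_zero hα n⟩
    · simp [sum_range_succ' _ (n + 1), Finset.sum_apply, nodalInv_succ_eq_sum hα t.2]

theorem pochC_neg_add_mul_pochC_add (α t : ℂ) (n : ℕ) :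
    pochC (-t + α) n * pochC (t + α) n = (-1) ^ n * ∏ j ∈ range n, (t ^ 2 - (α + j) ^ 2) := by
  induction n with
  | zero => simp [pochC]
  | succ n ih =>
    simp only [pochC, ascPochhammer_succ_eval] at ih ⊢
    rw [prod_range_succ, pow_succ]
    linear_combination ((-t + α + n) * (t + α + n)) * ih

theorem pochC_ne_zero_iff {x : ℂ} {n : ℕ} : pochC x n ≠ 0 ↔ ∀ i < n, (i : ℂ) ≠ -x := by
  simp [pochC, ascPochhammer_eval_eq_zero_iff]

theorem pochC_ne_zero_of_pos_re {x : ℂ} (hx : 0 < x.re) (n : ℕ) : pochC x n ≠ 0 :=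
  pochC_ne_zero_iff.mpr fun i _ h => by
    have := congrArg Complex.re h
    simp only [Complex.natCast_re, Complex.neg_re] at this
    linarith [(i.cast_nonneg : (0 : ℝ) ≤ i)]

noncomputable def gcoeff (a eps : ℝ) (L k n : ℕ) : ℂ :=
  (-1) ^ n * (pochC (-(k : ℂ)) n * pochC ((k : ℂ) + 2 * (eps : ℂ)) n * pochC (L : ℂ) n *
    pochC ((L : ℂ) + (a : ℂ)) n) / (pochC ((a : ℂ) + 1) n * (n.factorial : ℂ))

theorem gfun_eq_sum_nodalInv (a eps : ℝ) (L k : ℕ) (t : ℂ) :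
    gfun a eps L k t = ∑ n ∈ range (k + 1), gcoeff a eps L k n * nodalInv eps L n t := by
  refine sum_congr rfl fun n _ => ?_
  have hsign : ((-1 : ℂ) ^ n)⁻¹ = (-1) ^ n := by rw [← inv_pow, inv_neg, inv_one]
  rw [add_assoc (-t), add_assoc t, pochC_neg_add_mul_pochC_add]
  simp only [gcoeff, nodalInv, pole, div_eq_mul_inv, mul_inv, hsign]
  ring

theorem gcoeff_self_ne_zero (ha : -1 < a) (heps : 0 ≤ eps) (hL : 0 < L) (k : ℕ) :
    gcoeff a eps L k k ≠ 0 := by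
  have hL' : (1 : ℝ) ≤ L := by exact_mod_cast hL
  have h₁ : pochC (-(k : ℂ)) k ≠ 0 := pochC_ne_zero_iff.mpr fun i hi h => by
    rw [neg_neg, Nat.cast_inj] at h
    omega
  have h₂ : pochC ((k : ℂ) + 2 * (eps : ℂ)) k ≠ 0 := pochC_ne_zero_iff.mpr fun i hi h => by
    have hre := congrArg Complex.re h
    simp only [Complex.natCast_re, neg_add_rev, Complex.add_re, Complex.neg_re, Complex.mul_re,
      Complex.re_ofNat, Complex.ofReal_re, Complex.im_ofNat, Complex.ofReal_im, mul_zero,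
      sub_zero] at hre
    have hik : (i : ℝ) < k := by exact_mod_cast hi
    linarith [(i.cast_nonneg : (0 : ℝ) ≤ i)]
  have h₃ := pochC_ne_zero_of_pos_re (x := L) (by simpa using hL) k
  have h₄ := pochC_ne_zero_of_pos_re (x := L + a)
    (by simp only [Complex.add_re, Complex.natCast_re, Complex.ofReal_re]; linarith) k
  have h₅ := pochC_ne_zero_of_pos_re (x := a + 1)
    (by simp only [Complex.add_re, Complex.ofReal_re, Complex.one_re]; linarith) k
  exact div_ne_zero (mul_ne_zero (pow_ne_zero _ (neg_ne_zero.mpr one_ne_zero))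
    (mul_ne_zero (mul_ne_zero (mul_ne_zero h₁ h₂) h₃) h₄))
    (mul_ne_zero h₅ (Nat.cast_ne_zero.mpr k.factorial_ne_zero))

theorem isTriangular_nodalInv_gfun (ha : -1 < a) (heps : 0 ≤ eps) (hL : 0 < L) :
    IsTriangular ℂ (fun n => {t | Adm eps L t}.domRestrict (nodalInv eps L n))
      (fun k => {t | Adm eps L t}.domRestrict (gfun a eps L k)) :=
  IsTriangular.of_eq_sum_range fun k => ⟨gcoeff a eps L k, gcoeff_self_ne_zero ha heps hL k,
    funext fun t => by simp [gfun_eq_sum_nodalInv, Finset.sum_apply]⟩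

end Expansions

/-- **The functions `g_k` form a basis of `F(ε,L)`** (step 1 of Lemma 4.1 in the paper):
(i) each `g_k(·;a,ε,L)` lies in `F(ε,L)`; moreover for `k ≥ 1` its singularities are simple
poles contained in `{±A_1,…,±A_k}` and the residue at `±A_k` is nonzero; (ii) every
`φ ∈ F(ε,L)` admits a unique expansion as a finite linear combination of the `g_k`. -/
theorem gfun_basis (a eps : ℝ) (ha : -1 < a) (heps : 0 ≤ eps) (L : ℕ) (hL : 2 ≤ L) :
    (∀ k : ℕ, InF eps L (gfun a eps L k)) ∧
    (∀ k : ℕ, 1 ≤ k → ∃ r : ℕ → ℂ, (∀ m : ℕ, k < m → r m = 0) ∧ r k ≠ 0 ∧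
      ∀ t : ℂ, Adm eps L t → gfun a eps L k t = ∑ᶠ m : ℕ, r m * efun eps L m t) ∧
    (∀ φ : ℂ → ℂ, InF eps L φ →
      ∃! cc : ℕ → ℂ, (Function.support cc).Finite ∧
        ∀ t : ℂ, Adm eps L t → φ t = ∑ᶠ k : ℕ, cc k * gfun a eps L k t) := by
  have hα : 0 < (L : ℝ) + eps := by
    have : (2 : ℝ) ≤ L := by exact_mod_cast hL
    linarith
  have hG := (isTriangular_nodalInv_gfun ha heps (by omega)).trans (isTriangular_efun_nodalInv hα)
  refine ⟨fun k => ?_, fun k _ => ?_, fun φ ⟨r, hr, hφ⟩ => ?_⟩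
  · obtain ⟨r, -, -, hr, hexp⟩ := hG.exists_finsum k
    exact ⟨r, hr, hexp⟩
  · obtain ⟨r, hgt, hk, -, hexp⟩ := hG.exists_finsum k
    exact ⟨r, hgt, hk, hexp⟩
  · exact (hG.linearIndependent (linearIndependent_efun hα)).existsUnique_finsum
      (hG.span_range_le (domRestrict_mem_span_of_eq_finsum hr hφ))
end

section
/- Let a > −1 and ε ≥ 0 be real, let L ≥ 2 and K ≥ 1 be integers, and let κ ∈ Sign⁺_K with k_i := κ_i+K−i. Then, for every (t_1,…,t_K) ∈ ℂ^K at which all the determinants and Pochhammer denominators involved are nonzero, G_{κ,K}(t_1,…,t_K)/d_K(κ;ε) = Σ_{μ∈Sign⁺_K, μ_i ≤ κ_i for all i} A_{μ,κ} · σ_{μ,K}(t_1²,…,t_K² | (L+ε)², (L+ε+1)², (L+ε+2)², …), where, with m_i := μ_i+K−i, A_{μ,κ} := ∏_{i=1}^{K} [(L)_{m_i}(L+a)_{m_i}(a+1)_{K−i}(K−i)!]/[(a+1)_{m_i}·m_i!·(L)_{K−i}(L+a)_{K−i}] · S_{μ,K}((κ_1+K−1+ε)²,…,(κ_K+ε)²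 | ε², (ε+1)², (ε+2)², …). -/
open Finset

/-- Pochhammer symbol over `ℝ`. -/
noncomputable def pochR (x : ℝ) (n : ℕ) : ℝ := (ascPochhammer ℝ n).eval x

/-- `Sign⁺_N`: `N`-tuples of integers `ν₁ ≥ ⋯ ≥ ν_N ≥ 0`. -/
def SignP (N : ℕ) : Type := {ν : Fin N → ℤ // Antitone ν ∧ ∀ i, 0 ≤ ν i}

/-- Vandermonde product `∏_{i<j} (x_i − x_j)`. -/
noncomputable def vmonde {n : ℕ} (x : Fin n → ℝ) : ℝ :=
  ∏ i : Fin n, ∏ j ∈ Finset.Ioi i, (x i - x j)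

/-- `(x | c₀,c₁,…)^m = (x−c₀)(x−c₁)⋯(x−c_{m−1})`. -/
noncomputable def mfact (x : ℝ) (cs : ℕ → ℝ) (m : ℕ) : ℝ :=
  ∏ j ∈ Finset.range m, (x - cs j)

/-- Multiparameter Schur polynomial `S_{μ,M}(x | c) = det[(x_i | c)^{μ_r+M−r}] / V(x)`. -/
noncomputable def multiSchur {M : ℕ} (μ : Fin M → ℤ) (x : Fin M → ℝ) (cs : ℕ → ℝ) : ℝ :=
  Matrix.det (Matrix.of fun i r : Fin M => mfact (x i) cs ((μ r).toNat + (M - 1 - (r:ℕ)))) /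
    vmonde x

/-- Dual Schur function
`σ_{μ,K}(y | c₁,c₂,…) = det[1/((y_j−c₁)⋯(y_j−c_{μ_r+K−r}))] / det[1/((y_j−c₁)⋯(y_j−c_{K−r}))]`
(here `cs s` stands for `c_{s+1}`). -/
noncomputable def dualSchur {K : ℕ} (μ : Fin K → ℤ) (y : Fin K → ℂ) (cs : ℕ → ℂ) : ℂ :=
  Matrix.det (Matrix.of fun j r : Fin K =>
      1 / ∏ s ∈ Finset.range ((μ r).toNat + (K - 1 - (r:ℕ))), (y j - cs s)) /
  Matrix.det (Matrix.of fun j r : Fin K =>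
      1 / ∏ s ∈ Finset.range (K - 1 - (r:ℕ)), (y j - cs s))

/-- Schur-type function `G_{κ,K}(t₁,…,t_K)` built from the `g_k`. -/
noncomputable def Gfun (a eps : ℝ) (L : ℕ) {K : ℕ} (κ : Fin K → ℤ) (t : Fin K → ℂ) : ℂ :=
  Matrix.det (Matrix.of fun i j : Fin K => gfun a eps L ((κ i).toNat + (K - 1 - (i:ℕ))) (t j)) /
  Matrix.det (Matrix.of fun i j : Fin K => gfun a eps L (K - 1 - (i:ℕ)) (t j))

/-- `d_K(κ; ε) = ∏_{i<j} ((k_i+ε)²−(k_j+ε)²)/((K−i+ε)²−(K−j+ε)²)` with `k_i = κ_i+K−i`. -/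
noncomputable def dfun (K : ℕ) (κ : Fin K → ℤ) (eps : ℝ) : ℝ :=
  ∏ i : Fin K, ∏ j ∈ Finset.Ioi i,
    (((κ i : ℝ) + (K:ℝ) - 1 - ((i:ℕ):ℝ) + eps)^2 - ((κ j : ℝ) + (K:ℝ) - 1 - ((j:ℕ):ℝ) + eps)^2) /
    (((K:ℝ) - 1 - ((i:ℕ):ℝ) + eps)^2 - ((K:ℝ) - 1 - ((j:ℕ):ℝ) + eps)^2)

/-- The coefficient `A_{μ,κ}`: with `m_i = μ_i+K−i`,
`A_{μ,κ} = ∏_i [(L)_{m_i}(L+a)_{m_i}(a+1)_{K−i}(K−i)!]/[(a+1)_{m_i} m_i! (L)_{K−i}(L+a)_{K−i}]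
 · S_{μ,K}((κ₁+K−1+ε)²,…,(κ_K+ε)² | ε², (ε+1)², …)`. -/
noncomputable def Acoef (a eps : ℝ) (L K : ℕ) (μ κ : Fin K → ℤ) : ℝ :=
  (∏ i : Fin K,
    (pochR (L:ℝ) ((μ i).toNat + (K - 1 - (i:ℕ))) * pochR ((L:ℝ)+a) ((μ i).toNat + (K - 1 - (i:ℕ))) *
      pochR (a+1) (K - 1 - (i:ℕ)) * (Nat.factorial (K - 1 - (i:ℕ)) : ℝ)) /
    (pochR (a+1) ((μ i).toNat + (K - 1 - (i:ℕ))) *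
      (Nat.factorial ((μ i).toNat + (K - 1 - (i:ℕ))) : ℝ) *
      pochR (L:ℝ) (K - 1 - (i:ℕ)) * pochR ((L:ℝ)+a) (K - 1 - (i:ℕ)))) *
  multiSchur μ (fun i : Fin K => ((κ i : ℝ) + (K:ℝ) - 1 - ((i:ℕ):ℝ) + eps)^2)
    (fun s : ℕ => (eps + (s:ℝ))^2)

/-!
Write `(x | c)^n = ∏_{s<n} (x - c_s)`. Since `(-k)_n (k+2ε)_n` and `(L+ε-t)_n (L+ε+t)_n` are
`(-1)^n` times the factorial powers `((k+ε)² | ε², (ε+1)², …)^n` and `(t² | (L+ε)², (L+ε+1)², …)^n`,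
`g_k(t) = Σ_n w_n ((k+ε)² | ε², …)^n / (t² | (L+ε)², …)^n`, `w_n = (L)_n (L+a)_n / ((a+1)_n n!)`.
So `[g_{k_i}(t_j)]` is a product of a `K × N` and an `N × K` matrix, and Cauchy–Binet expands its
determinant over strictly decreasing `m`. The minors of the first factor are the numerators of
multiparameter Schur polynomials; they vanish unless `m ≤ k`, i.e. `m = μ + δ` with `μ ⊆ κ`. The
minors of the second factor are the numerators of dual Schur functions. For `k = δ = (K-1, …, 0)`
only `m = δ` survives, with a Vandermonde minor; it and the Vandermonde of `κ + δ` make `d_K(κ; ε)`.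
-/

open Matrix Equiv

section CauchyBinet

variable {R α : Type*} [CommRing R] {K : ℕ}

theorem det_sum_mul_eq_sum_prod_mul_det (s : Finset α) (A : Fin K → α → R)
    (B : α → Fin K → R) :
    det (of fun i j => ∑ n ∈ s, A i n * B n j) =
      ∑ r ∈ Fintype.piFinset fun _ => s, (∏ i, A i (r i)) * det (of fun i j => B (r i) j) := by
  have hrows : (of fun i j => ∑ n ∈ s, A i n * B n j) = fun i => ∑ n ∈ s, A i n • B n := by
    ext i j
    simp [Finset.sum_apply]
  rw [hrows]
  exact (detRowAlternating.toMultilinearMap.map_sum_finset _ _).trans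
    (sum_congr rfl fun r _ => detRowAlternating.toMultilinearMap.map_smul_univ _ _)

variable [LinearOrder α]

theorem exists_strictAnti_comp_perm {r : Fin K → α} (hr : Function.Injective r) :
    ∃ (m : Fin K → α) (σ : Perm (Fin K)), StrictAnti m ∧ m ∘ σ = r := by
  classical
  have hcard : (univ.image r).card = K := by
    rw [card_image_of_injective _ hr, card_univ, Fintype.card_fin]
  set m : Fin K → α := (univ.image r).orderEmbOfFin hcard ∘ Fin.rev
  have hm : StrictAnti m := ((univ.image r).orderEmbOfFin hcard).strictMono.comp_strictAnti
    Fin.rev_strictAnti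
  have hrange : Set.range r = Set.range m := by
    rw [Fin.rev_surjective.range_comp, range_orderEmbOfFin, coe_image, coe_univ, Set.image_univ]
  refine ⟨m, (ofInjective r hr).trans ((Equiv.setCongr hrange).trans
    (ofInjective m hm.injective).symm), hm, funext fun i => ?_⟩
  simp [apply_ofInjective_symm]

theorem sum_filter_injective_eq_sum_strictAnti {M : Type*} [AddCommMonoid M] (s : Finset α)
    (f : (Fin K → α) → M) :
    ∑ r ∈ (Fintype.piFinset fun _ => s).filter Function.Injective, f r =
      ∑ m ∈ (Fintype.piFinset fun _ => s).filter StrictAnti, ∑ σ : Perm (Fin K), f (m ∘ σ) := by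
  rw [← sum_product']
  symm
  refine sum_nbij (fun p => p.1 ∘ p.2) ?maps ?inj ?surj fun _ _ => rfl
  case maps =>
    intro p hp
    simp only [mem_product, mem_filter, Fintype.mem_piFinset] at hp ⊢
    exact ⟨fun i => hp.1.1 _, hp.1.2.injective.comp p.2.injective⟩
  case inj =>
    intro p hp q hq hpq
    simp only [coe_product, coe_filter, Set.mem_prod, Set.mem_ofPred_eq] at hp hq
    have hrange : Set.range p.1 = Set.range q.1 := by
      rw [← p.2.surjective.range_comp p.1, ← q.2.surjective.range_comp q.1]
      exact congrArg Set.range hpq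
    have hm : p.1 = q.1 := (hp.1.2.range_inj hq.1.2).mp hrange
    have hσ : p.2 = q.2 := Equiv.ext fun i => hp.1.2.injective (by
      simpa [hm] using congrFun hpq i)
    exact Prod.ext hm hσ
  case surj =>
    intro r hr
    simp only [coe_filter, Set.mem_ofPred_eq, Fintype.mem_piFinset] at hr
    obtain ⟨m, σ, hm, rfl⟩ := exists_strictAnti_comp_perm hr.2
    refine ⟨(m, σ), ?_, rfl⟩
    simp only [coe_product, coe_filter, Set.mem_prod, Set.mem_ofPred_eq, Fintype.mem_piFinset,
      coe_univ, Set.mem_univ, and_true]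
    exact ⟨fun i => by simpa using hr.1 (σ.symm i), hm⟩

theorem det_sum_mul_eq_sum_strictAnti (s : Finset α) (A : Fin K → α → R)
    (B : α → Fin K → R) :
    det (of fun i j => ∑ n ∈ s, A i n * B n j) =
      ∑ m ∈ (Fintype.piFinset fun _ => s).filter StrictAnti,
        det (of fun i j => A i (m j)) * det (of fun i j => B (m i) j) := by
  have hnoninj : ∀ r ∈ Fintype.piFinset fun _ => s,
      (∏ i, A i (r i)) * det (of fun i j => B (r i) j) ≠ 0 → Function.Injective r := by
    intro r _ hr
    by_contra hinj
    obtain ⟨i, j, hij, hne⟩ := Function.not_injective_iff.mp hinj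
    rw [det_zero_of_row_eq hne (funext fun k => by simp only [of_apply, hij]), mul_zero] at hr
    exact hr rfl
  rw [det_sum_mul_eq_sum_prod_mul_det, ← sum_filter_of_ne hnoninj,
    sum_filter_injective_eq_sum_strictAnti]
  refine sum_congr rfl fun m _ => ?_
  have hpermute : ∀ σ : Perm (Fin K), det (of fun i j => B (m (σ i)) j) =
      Perm.sign σ * det (of fun i j => B (m i) j) :=
    fun σ => det_permute σ (of fun i j => B (m i) j)
  simp only [Function.comp_apply, hpermute, ← mul_assoc, ← sum_mul]
  congr 1
  rw [← det_transpose, det_apply']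
  exact sum_congr rfl fun σ _ => by rw [mul_comm]; rfl

end CauchyBinet

theorem det_eq_zero_of_lowerLeft_eq_zero {R : Type*} [CommRing R] {K : ℕ}
    {M : Matrix (Fin K) (Fin K) R} (r : Fin K) (h : ∀ i j, r ≤ i → j ≤ r → M i j = 0) :
    M.det = 0 := by
  rw [det_apply]
  refine sum_eq_zero fun σ _ => ?_
  obtain ⟨j, hj, hσj⟩ : ∃ j ≤ r, r ≤ σ j := by
    by_contra! hc
    have := card_le_card_of_injOn σ (fun j hj => mem_Iio.mpr (hc j (mem_Iic.mp hj)))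
      σ.injective.injOn
    simp at this
  rw [prod_eq_zero (f := fun i => M (σ i) i) (mem_univ j) (h _ _ hσj hj), smul_zero]

open Polynomial in
theorem det_mfact_sub_eq_vmonde {K : ℕ} (x : Fin K → ℝ) (cs : ℕ → ℝ) :
    det (of fun i j : Fin K => mfact (x i) cs (K - 1 - j)) = vmonde x := by
  set p : Fin K → ℝ[X] := fun j => ∏ s ∈ range j, (X - C (cs s))
  have hp : det (vandermonde x) = det (of fun i j => (p j).eval (x i)) :=
    det_eval_matrixOfPolynomials_eq_det_vandermonde x p
      (fun j => by simp [p, natDegree_prod_of_monic _ _ fun s _ => monic_X_sub_C (cs s)])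
      (fun j => monic_prod_of_monic _ _ fun s _ => monic_X_sub_C (cs s))
  have hrev : ∀ j : Fin K, K - 1 - (j : ℕ) = Fin.rev j := fun j => by rw [Fin.val_rev]; omega
  calc det (of fun i j : Fin K => mfact (x i) cs (K - 1 - j))
      = det ((of fun i j => (p j).eval (x i)).submatrix id Fin.revPerm) := by
        congr 1; ext i j; simp [mfact, p, eval_prod, hrev]
    _ = det ((vandermonde x).submatrix id Fin.revPerm) := by rw [det_permute', det_permute', hp]
    _ = det (projVandermonde 1 x) := by congr 1; ext i j; simp [projVandermonde_apply]
    _ = vmonde x := by rw [det_projVandermonde]; simp [vmonde]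

theorem mfact_sq_add_eq_zero (eps : ℝ) {k n : ℕ} (h : k < n) :
    mfact (((k : ℝ) + eps) ^ 2) (fun s => (eps + s) ^ 2) n = 0 :=
  prod_eq_zero (mem_range.mpr h) (by ring)

noncomputable def factorialAlternant {K : ℕ} (x : Fin K → ℝ) (cs : ℕ → ℝ) (m : Fin K → ℕ) : ℝ :=
  det (of fun i j => mfact (x i) cs (m j))

theorem factorialAlternant_eq_zero {K : ℕ} (eps : ℝ) {k m : Fin K → ℕ} (hk : Antitone k)
    (hm : Antitone m) {r : Fin K} (hr : k r < m r) :
    factorialAlternant (fun i => ((k i : ℝ) + eps) ^ 2) (fun s => (eps + s) ^ 2) m = 0 :=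
  det_eq_zero_of_lowerLeft_eq_zero r fun _ _ hri hjr =>
    mfact_sq_add_eq_zero eps ((hk hri).trans_lt (hr.trans_le (hm hjr)))

theorem pochC_eq_prod (x : ℂ) (n : ℕ) : pochC x n = ∏ s ∈ range n, (x + s) := by
  induction n with
  | zero => simp [pochC]
  | succ n ih => rw [prod_range_succ, ← ih, pochC, pochC, ascPochhammer_succ_right]; simp

theorem pochC_sub_mul_pochC_add (c x : ℂ) (n : ℕ) :
    pochC (c - x) n * pochC (c + x) n = (-1) ^ n * ∏ s ∈ range n, (x ^ 2 - (c + s) ^ 2) := by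
  have hneg := prod_neg (s := range n) (f := fun s : ℕ => x ^ 2 - (c + s) ^ 2)
  rw [card_range] at hneg
  rw [pochC_eq_prod, pochC_eq_prod, ← prod_mul_distrib, ← hneg]
  exact prod_congr rfl fun s _ => by ring

theorem ofReal_pochR (x : ℝ) (n : ℕ) : ((pochR x n : ℝ) : ℂ) = pochC x n := by
  rw [pochR, pochC, ascPochhammer_eval₂ Complex.ofRealHom]
  exact (Polynomial.eval₂_at_apply Complex.ofRealHom x).symm

noncomputable def gWeight (a : ℝ) (L n : ℕ) : ℝ :=
  pochR L n * pochR (L + a) n / (pochR (a + 1) n * n.factorial)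

theorem gfun_eq_sum (a eps : ℝ) (L : ℕ) {k N : ℕ} (hk : k < N) (t : ℂ) :
    gfun a eps L k t = ∑ n ∈ range N,
      ((gWeight a L n * mfact (((k : ℝ) + eps) ^ 2) (fun s => (eps + s) ^ 2) n : ℝ) : ℂ) *
        (1 / ∏ s ∈ range n, (t ^ 2 - ((L : ℂ) + eps + s) ^ 2)) := by
  rw [gfun, ← sum_subset (range_subset_range.mpr hk) fun n _ hn => by
    rw [mfact_sq_add_eq_zero eps (by simpa using hn)]; simp]
  refine sum_congr rfl fun n _ => ?_
  rw [show -(k : ℂ) = eps - (k + eps) by ring, show (k : ℂ) + 2 * eps = eps + (k + eps) by ring,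
    pochC_sub_mul_pochC_add, show -t + L + eps = (L + eps) - t by ring,
    show t + L + eps = (L + eps) + t by ring, pochC_sub_mul_pochC_add]
  have hsign : ((-1 : ℂ)) ^ n ≠ 0 := pow_ne_zero _ (neg_ne_zero.mpr one_ne_zero)
  simp only [mul_assoc, mul_div_mul_left _ _ hsign]
  push_cast [gWeight, mfact, ofReal_pochR]
  ring

section StrictAntiTuples

variable {K : ℕ}

theorem StrictAnti.antitone_add_val {m : Fin K → ℕ} (hm : StrictAnti m) :
    Antitone fun i => m i + i := by
  intro i j hij
  obtain ⟨d, hd⟩ := Nat.exists_eq_add_of_le (Fin.le_def.mp hij)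
  induction d generalizing j with
  | zero => rw [Fin.ext (hd.trans (add_zero _))]
  | succ d ih =>
    have hj' : (i : ℕ) + d < K := by omega
    have h1 := ih (j := ⟨i + d, hj'⟩) (Fin.le_def.mpr (by simp)) rfl
    have h2 := hm (show (⟨i + d, hj'⟩ : Fin K) < j from Fin.lt_def.mpr (by simp; omega))
    simp only at h1 ⊢
    omega

theorem StrictAnti.sub_one_sub_le {m : Fin K → ℕ} (hm : StrictAnti m) (i : Fin K) :
    K - 1 - i ≤ m i := by
  have hi := i.isLt
  have := hm.antitone_add_val (show i ≤ ⟨K - 1, by omega⟩ from Fin.le_def.mpr (by simp; omega))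
  simp only at this
  omega

def boundedStrictAnti (k : Fin K → ℕ) : Finset (Fin K → ℕ) :=
  (Fintype.piFinset fun r => range (k r + 1)).filter StrictAnti

theorem mem_boundedStrictAnti {k m : Fin K → ℕ} :
    m ∈ boundedStrictAnti k ↔ StrictAnti m ∧ ∀ r, m r ≤ k r := by
  simp [boundedStrictAnti, and_comm]

theorem boundedStrictAnti_sub_one_sub :
    boundedStrictAnti (fun r : Fin K => K - 1 - r) = {fun r : Fin K => K - 1 - (r : ℕ)} := by
  ext m
  rw [mem_boundedStrictAnti, mem_singleton]
  constructor
  · exact fun ⟨hm, hle⟩ => funext fun r => le_antisymm (hle r) (hm.sub_one_sub_le r)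
  · rintro rfl
    refine ⟨fun i j hij => ?_, fun _ => le_rfl⟩
    have := Fin.lt_def.mp hij
    have := j.isLt
    simp only
    omega

end StrictAntiTuples

noncomputable def dualAlternant {K : ℕ} (y : Fin K → ℂ) (cs : ℕ → ℂ) (m : Fin K → ℕ) : ℂ :=
  det (of fun j r => 1 / ∏ s ∈ range (m r), (y j - cs s))

theorem det_gfun_eq_sum (a eps : ℝ) (L : ℕ) {K : ℕ} {k : Fin K → ℕ} (hk : Antitone k)
    (t : Fin K → ℂ) :
    det (of fun i j => gfun a eps L (k i) (t j)) =
      ∑ m ∈ boundedStrictAnti k,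
        (((∏ j, gWeight a L (m j)) *
          factorialAlternant (fun i => ((k i : ℝ) + eps) ^ 2) (fun s => (eps + s) ^ 2) m : ℝ) : ℂ) *
          dualAlternant (fun j => t j ^ 2) (fun s => ((L : ℂ) + eps + s) ^ 2) m := by
  set N := univ.sup k + 1
  have hkN : ∀ i, k i < N := fun i => Nat.lt_succ_of_le (le_sup (mem_univ i))
  have hfactor : (of fun i j => gfun a eps L (k i) (t j)) = of fun i j => ∑ n ∈ range N,
      ((gWeight a L n * mfact (((k i : ℝ) + eps) ^ 2) (fun s => (eps + s) ^ 2) n : ℝ) : ℂ) *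
        (1 / ∏ s ∈ range n, (t j ^ 2 - ((L : ℂ) + eps + s) ^ 2)) := by
    ext i j
    exact gfun_eq_sum a eps L (hkN i) (t j)
  have hsub : boundedStrictAnti k ⊆ (Fintype.piFinset fun _ => range N).filter StrictAnti := by
    intro m hm
    rw [mem_boundedStrictAnti] at hm
    simpa [hm.1] using fun r => (hm.2 r).trans_lt (hkN r)
  rw [hfactor, det_sum_mul_eq_sum_strictAnti]
  refine (sum_congr rfl fun m _ => ?_).trans (sum_subset hsub fun m hm hmk => ?_).symm
  · congr 1
    · rw [factorialAlternant, ← det_mul_row]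
      exact (Complex.ofRealHom.map_det _).symm
    · rw [dualAlternant, ← det_transpose]
      rfl
  · have hm : StrictAnti m := (mem_filter.mp hm).2
    obtain ⟨r, hr⟩ : ∃ r, k r < m r := by
      by_contra! h
      exact hmk (mem_boundedStrictAnti.mpr ⟨hm, h⟩)
    rw [factorialAlternant_eq_zero eps hk hm.antitone hr]
    simp

section Signatures

variable {K : ℕ}

-- The paper's `μ_i + K - i` with 0-based `i`; `toNat` only matters off signatures.
def shifted (μ : Fin K → ℤ) (i : Fin K) : ℕ := (μ i).toNat + (K - 1 - i)

theorem shifted_strictAnti {μ : Fin K → ℤ} (hμ : Antitone μ) : StrictAnti (shifted μ) := by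
  intro i j hij
  have := Int.toNat_le_toNat (hμ hij.le)
  have := Fin.lt_def.mp hij
  have := j.isLt
  simp only [shifted]
  omega

theorem natCast_sub_one_sub_val (i : Fin K) : ((K - 1 - i : ℕ) : ℝ) = K - 1 - i := by
  have := i.isLt
  rw [Nat.cast_sub (by omega), Nat.cast_sub (by omega), Nat.cast_one]

theorem cast_shifted {μ : Fin K → ℤ} (hμ : ∀ i, 0 ≤ μ i) (i : Fin K) :
    ((shifted μ i : ℕ) : ℝ) = μ i + K - 1 - i := by
  rw [shifted, Nat.cast_add, natCast_sub_one_sub_val, ← Int.cast_natCast,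
    Int.toNat_of_nonneg (hμ i)]
  ring

theorem shifted_bijOn (κ : SignP K) :
    Set.BijOn (fun μ : SignP K => shifted μ.1) {μ | ∀ i, μ.1 i ≤ κ.1 i}
      (boundedStrictAnti (shifted κ.1)) := by
  refine ⟨fun μ hμ => ?_, fun μ _ ν _ h => ?_, fun m hm => ?_⟩
  · exact mem_boundedStrictAnti.mpr ⟨shifted_strictAnti μ.2.1,
      fun r => Nat.add_le_add_right (Int.toNat_le_toNat (hμ r)) _⟩
  · refine Subtype.ext (funext fun r => ?_)
    have hr : shifted μ.1 r = shifted ν.1 r := congrFun h r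
    have := μ.2.2 r
    have := ν.2.2 r
    simp only [shifted] at hr
    omega
  · obtain ⟨hm, hmκ⟩ := mem_boundedStrictAnti.mp (mem_coe.mp hm)
    refine ⟨⟨fun r => (m r : ℤ) - (K - 1 - r : ℕ), fun i j hij => ?_, fun r => ?_⟩,
      fun r => ?_, funext fun r => ?_⟩
    · have hadd := hm.antitone_add_val hij
      have := j.isLt
      dsimp only at hadd ⊢
      omega
    · have := hm.sub_one_sub_le r
      simp only
      omega
    · show (m r : ℤ) - (K - 1 - r : ℕ) ≤ κ.1 r
      have hle := hmκ r
      have := κ.2.2 r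
      simp only [shifted] at hle
      omega
    · have := hm.sub_one_sub_le r
      simp only [shifted]
      omega

end Signatures

theorem Gfun_eq_div (a eps : ℝ) (L : ℕ) {K : ℕ} (κ : Fin K → ℤ) (t : Fin K → ℂ) :
    Gfun a eps L κ t = det (of fun i j => gfun a eps L (shifted κ i) (t j)) /
      det (of fun i j : Fin K => gfun a eps L (K - 1 - i) (t j)) := rfl

theorem multiSchur_eq_div {K : ℕ} (μ : Fin K → ℤ) (x : Fin K → ℝ) (cs : ℕ → ℝ) :
    multiSchur μ x cs = factorialAlternant x cs (shifted μ) / vmonde x := rfl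

theorem dualSchur_eq_div {K : ℕ} (μ : Fin K → ℤ) (y : Fin K → ℂ) (cs : ℕ → ℂ) :
    dualSchur μ y cs =
      dualAlternant y cs (shifted μ) / dualAlternant y cs (fun r => K - 1 - r) := rfl

theorem Acoef_eq (a eps : ℝ) (L K : ℕ) (μ κ : Fin K → ℤ) :
    Acoef a eps L K μ κ =
      (∏ i, gWeight a L (shifted μ i)) / (∏ i : Fin K, gWeight a L (K - 1 - i)) *
        multiSchur μ (fun i => ((κ i : ℝ) + K - 1 - i + eps) ^ 2) (fun s => (eps + s) ^ 2) := by
  rw [Acoef, ← prod_div_distrib]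
  congr 1
  refine prod_congr rfl fun i _ => ?_
  simp only [gWeight, shifted, div_eq_mul_inv, mul_inv, inv_inv]
  ring

theorem dfun_eq_div (K : ℕ) (κ : Fin K → ℤ) (eps : ℝ) :
    dfun K κ eps = vmonde (fun i => ((κ i : ℝ) + K - 1 - i + eps) ^ 2) /
      vmonde (fun i : Fin K => ((K : ℝ) - 1 - i + eps) ^ 2) := by
  rw [dfun, vmonde, vmonde, ← prod_div_distrib]
  exact prod_congr rfl fun i _ => prod_div_distrib _ _

theorem Gfun_expansion_dualSchur_general
    (a eps : ℝ)
    (L K : ℕ)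
    (κ : SignP K) (t : Fin K → ℂ)
    (hdet1 : Matrix.det (Matrix.of fun i j : Fin K =>
        gfun a eps L (K - 1 - (i:ℕ)) (t j)) ≠ 0) :
    Gfun a eps L κ.1 t / ((dfun K κ.1 eps : ℝ) : ℂ)
      = ∑ᶠ (μ : SignP K) (_ : ∀ i, μ.1 i ≤ κ.1 i),
          ((Acoef a eps L K μ.1 κ.1 : ℝ) : ℂ) *
            dualSchur μ.1 (fun j => (t j)^2) (fun s : ℕ => ((L:ℂ) + (eps:ℂ) + (s:ℂ))^2) := by
  have hnum := det_gfun_eq_sum a eps L (shifted_strictAnti κ.2.1).antitone t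
  have hden := det_gfun_eq_sum a eps L (k := fun i : Fin K => K - 1 - i)
    (fun i j hij => Nat.sub_le_sub_left (Fin.le_def.mp hij) _) t
  rw [boundedStrictAnti_sub_one_sub, sum_singleton, factorialAlternant,
    det_mfact_sub_eq_vmonde] at hden
  simp only [cast_shifted κ.2.2, natCast_sub_one_sub_val] at hnum hden
  have hV0 : vmonde (fun i : Fin K => ((K : ℝ) - 1 - i + eps) ^ 2) ≠ 0 :=
    fun h => hdet1 (by rw [hden, h]; simp)
  rw [Gfun_eq_div, hnum, hden, dfun_eq_div, Complex.ofReal_mul, mul_right_comm, ← div_div,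
    Complex.ofReal_div, div_div_div_cancel_right₀ (Complex.ofReal_ne_zero.mpr hV0), sum_div,
    sum_div, ← finsum_mem_coe_finset]
  refine (finsum_mem_eq_of_bijOn _ (shifted_bijOn κ) fun _ _ => rfl).symm.trans
    (finsum_mem_congr rfl fun μ _ => ?_)
  rw [Acoef_eq, multiSchur_eq_div, dualSchur_eq_div]
  push_cast
  ring

/-- **Expansion of `G_{κ,K}/d_K(κ;ε)` in dual Schur functions** (Lemma 4.4 of the paper):
`G_{κ,K}(t₁,…,t_K)/d_K(κ;ε) = Σ_{μ⊆κ} A_{μ,κ} σ_{μ,K}(t₁²,…,t_K² | (L+ε)², (L+ε+1)², …)`. -/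
theorem Gfun_expansion_dualSchur
    (a eps : ℝ) (ha : -1 < a) (heps : 0 ≤ eps)
    (L K : ℕ) (hL : 2 ≤ L) (hK : 1 ≤ K)
    (κ : SignP K) (t : Fin K → ℂ)
    (hpoch : ∀ (j : Fin K) (m : ℕ), (t j)^2 ≠ ((L:ℂ) + (eps:ℂ) + (m:ℂ))^2)
    (hdet1 : Matrix.det (Matrix.of fun i j : Fin K =>
        gfun a eps L (K - 1 - (i:ℕ)) (t j)) ≠ 0)
    (hdet2 : Matrix.det (Matrix.of fun j r : Fin K =>
        1 / ∏ s ∈ Finset.range (K - 1 - (r:ℕ)),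
          ((t j)^2 - (((L:ℂ) + (eps:ℂ) + (s:ℂ))^2))) ≠ 0) :
    Gfun a eps L κ.1 t / ((dfun K κ.1 eps : ℝ) : ℂ)
      = ∑ᶠ (μ : SignP K) (_ : ∀ i, μ.1 i ≤ κ.1 i),
          ((Acoef a eps L K μ.1 κ.1 : ℝ) : ℂ) *
            dualSchur μ.1 (fun j => (t j)^2) (fun s : ℕ => ((L:ℂ) + (eps:ℂ) + (s:ℂ))^2) :=
  Gfun_expansion_dualSchur_general a eps L K κ t hdet1
end

section
/- Let p ∈ ℕ and set A := −2p (an even nonpositive integer). Let B, D, E ∈ ℂ be such that ((A+B+1)/2)_{2p} ≠ 0 and (E)_{2p} ≠ 0. Then Σ_{n=0}^{2p} [(A)_n (B)_n (D)_n] / [((A+B+1)/2)_n (E)_n · n!] = Σ_{n=0}^{p} [(A/2)_n (B/2)_n (E−D)_n (D)_n] / [((A+B+1)/2)_n (E/2)_n ((E+1)/2)_n · n!]; that is, the terminating ₃F₂[A, B, D; (A+B+1)/2, E | 1] equals the terminating ₄F₃[A/2, B/2, E−D, D; (A+B+1)/2, E/2, (E+1)/2 | 1]. -/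
/-!
The quadratic transformation `₂F₁(a, b; (a+b+1)/2; x) = ₂F₁(a/2, b/2; (a+b+1)/2; 4x(1-x))`, read
coefficientwise, writes `(a)ₙ (b)ₙ` through the coefficients of the powers `(4x(1-x))ᵏ`. This is a
polynomial identity in `a` and `b`; after reflecting the summation index (`k = n - j`) it becomes
the terminating Pfaff–Saalschütz sum, which is two applications of Chu–Vandermonde.

Substituting it into the ₃F₂ and exchanging the two sums, the inner sum over `n` is Chu–Vandermonde
again: `∑ᵢ (-1)ⁱ C(k,i) (D)ₖ₊ᵢ / (E)ₖ₊ᵢ = (D)ₖ (E-D)ₖ / (E)₂ₖ`. Legendre's duplication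
`(E)₂ₖ = 4ᵏ (E/2)ₖ ((E+1)/2)ₖ` turns the result into the ₄F₃; the factor `(A/2)ₖ = (-p)ₖ`
vanishes for `k > p`.
-/

open Finset

@[simp]
lemma pochC_zero (x : ℂ) : pochC x 0 = 1 := by simp [pochC]

@[simp]
lemma pochC_one (x : ℂ) : pochC x 1 = x := by simp [pochC]

lemma pochC_succ (x : ℂ) (n : ℕ) : pochC x (n + 1) = pochC x n * (x + n) :=
  ascPochhammer_succ_eval n x

lemma pochC_add (x : ℂ) (m n : ℕ) : pochC x (m + n) = pochC x m * pochC (x + m) n := by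
  simp [pochC, ← ascPochhammer_mul, Polynomial.eval_comp]

lemma pochC_eq_neg_one_pow_mul (x : ℂ) (n : ℕ) :
    pochC x n = (-1) ^ n * pochC (1 - x - n) n := by
  induction n generalizing x with
  | zero => simp
  | succ n ih =>
    rw [pochC_succ, ih, add_comm n 1, pochC_add, pochC_one]
    push_cast
    ring_nf

lemma pochC_two_mul (x : ℂ) (k : ℕ) :
    pochC x (2 * k) = 4 ^ k * pochC (x / 2) k * pochC ((x + 1) / 2) k := by
  induction k with
  | zero => simp
  | succ k ih =>
    rw [show 2 * (k + 1) = 2 * k + 1 + 1 by ring, pochC_succ, pochC_succ, ih, pochC_succ,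
      pochC_succ]
    push_cast
    ring

lemma pochC_neg_natCast_of_lt {s k : ℕ} (h : s < k) : pochC (-(s : ℂ)) k = 0 :=
  ascPochhammer_eval_neg_coe_nat_of_lt h

lemma pochC_neg_natCast (s j : ℕ) :
    pochC (-(s : ℂ)) j = (-1) ^ j * (s.choose j * j.factorial) := by
  rw [pochC, ascPochhammer_eval_neg_eq_descPochhammer, descPochhammer_eval_eq_descFactorial,
    Nat.descFactorial_eq_factorial_mul_choose]
  push_cast
  ring

lemma pochC_ne_zero_of_le {x : ℂ} {k N : ℕ} (h : pochC x N ≠ 0) (hk : k ≤ N) :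
    pochC x k ≠ 0 := by
  obtain ⟨t, rfl⟩ := Nat.exists_eq_add_of_le hk
  exact left_ne_zero_of_mul (pochC_add x k t ▸ h)

theorem pochC_add_eq_sum_choose (x y : ℂ) (n : ℕ) :
    pochC (x + y) n = ∑ k ∈ range (n + 1), n.choose k * (pochC x k * pochC y (n - k)) := by
  induction n with
  | zero => simp
  | succ n ih =>
    rw [sum_choose_succ_mul (fun i j => pochC x i * pochC y j), pochC_succ, ih, sum_mul,
      ← sum_add_distrib]
    refine sum_congr rfl fun k hk => ?_
    have hk : k ≤ n := mem_range_succ_iff.mp hk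
    rw [Nat.sub_add_comm hk, pochC_succ, pochC_succ, Nat.cast_sub hk]
    ring

theorem pochC_sub_eq_sum_choose (b c : ℂ) (m : ℕ) :
    pochC (c - b) m =
      ∑ i ∈ range (m + 1), (-1) ^ i * m.choose i * pochC b i * pochC (c + i) (m - i) := by
  rw [pochC_eq_neg_one_pow_mul, show 1 - (c - b) - m = b + (1 - c - m) by ring,
    pochC_add_eq_sum_choose, mul_sum]
  refine sum_congr rfl fun i hi => ?_
  have hi : i ≤ m := mem_range_succ_iff.mp hi
  rw [pochC_eq_neg_one_pow_mul (c + i), Nat.cast_sub hi,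
    show 1 - (c + i) - (m - i) = 1 - c - m by ring]
  nth_rewrite 1 [← Nat.sub_add_cancel hi]
  ring

theorem pochC_sub_mul_pochC_sub_eq_sum (a b c : ℂ) (m : ℕ) :
    pochC (c - a) m * pochC (c - b) m = ∑ k ∈ range (m + 1), m.choose k * pochC a k * pochC b k *
      pochC (c + k) (m - k) * pochC (c - a - b) (m - k) := by
  -- Expand `(a)ₖ = (c - (c - a))ₖ` by Chu–Vandermonde, swap the sums, and sum the inner one
  -- by Vandermonde.
  set f : ℕ → ℕ → ℂ := fun i l => m.choose (i + l) *
    ((-1) ^ i * (i + l).choose i * pochC (c - a) i * pochC (c + i) l) *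
    pochC b (i + l) * pochC (c + (i + l : ℕ)) (m - (i + l)) * pochC (c - a - b) (m - (i + l))
  have expand : ∀ k ∈ range (m + 1), m.choose k * pochC a k * pochC b k *
      pochC (c + k) (m - k) * pochC (c - a - b) (m - k) = ∑ i ∈ range (k + 1), f i (k - i) := by
    intro k _
    have ha := pochC_sub_eq_sum_choose (c - a) c k
    rw [sub_sub_cancel] at ha
    rw [ha, mul_sum, sum_mul, sum_mul, sum_mul]
    refine sum_congr rfl fun i hi => ?_
    simp only [f, Nat.add_sub_cancel' (mem_range_succ_iff.mp hi)]
  have inner : ∀ i ∈ range (m + 1), ∑ l ∈ range (m + 1 - i), f i l =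
      pochC (c - a) m * ((-1) ^ i * m.choose i * pochC b i * pochC (c + i) (m - i)) := by
    intro i hi
    obtain ⟨r, rfl⟩ := Nat.exists_eq_add_of_le (mem_range_succ_iff.mp hi)
    have hsum : ∑ l ∈ range (r + 1), (r.choose l : ℂ) *
        (pochC (b + i) l * pochC (c - a - b) (r - l)) = pochC (c - a + i) r := by
      rw [← pochC_add_eq_sum_choose]; ring_nf
    rw [show i + r + 1 - i = r + 1 by omega, Nat.add_sub_cancel_left, pochC_add (c - a), ← hsum,
      mul_sum, sum_mul]
    refine sum_congr rfl fun l hl => ?_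
    have hl : l ≤ r := mem_range_succ_iff.mp hl
    have hchoose :
        ((i + r).choose (i + l) : ℂ) * (i + l).choose i = (i + r).choose i * r.choose l := by
      rw_mod_cast [Nat.choose_mul (Nat.le_add_right i l), Nat.add_sub_cancel_left,
        Nat.add_sub_cancel_left]
    have hc : pochC (c + i) l * pochC (c + (i + l : ℕ)) (r - l) = pochC (c + i) r := by
      rw [Nat.cast_add, ← add_assoc, ← pochC_add, Nat.add_sub_cancel' hl]
    simp only [f, pochC_add b i l, show i + r - (i + l) = r - l by omega]
    linear_combination ((-1) ^ i * pochC (c - a) i * pochC b i * pochC (b + i) l *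
      pochC (c - a - b) (r - l)) *
        ((i + r).choose (i + l) * (i + l).choose i * hc + pochC (c + i) r * hchoose)
  rw [sum_congr rfl expand, sum_range_diag_flip, sum_congr rfl inner, ← mul_sum,
    ← pochC_sub_eq_sum_choose]

lemma pochC_add_eq_two_pow_mul (x : ℂ) {m m' : ℕ} (h : m' = m ∨ m' = m + 1) :
    pochC x (m + m') = 2 ^ (m + m') * pochC (x / 2) m' * pochC ((x + 1) / 2) m := by
  rcases h with rfl | rfl
  · rw [← two_mul, pochC_two_mul, pow_mul]
    norm_num
  · rw [← add_assoc, ← two_mul, pochC_succ, pochC_two_mul, pochC_succ, pow_succ, pow_mul]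
    push_cast
    ring

-- For `m' ∈ {m, m + 1}` the pair `{-(m + m')/2, (1 - (m + m'))/2}` is `{-m, 1/2 - m'}`.
lemma pochC_neg_add_two_mul {m m' : ℕ} (h : m' = m ∨ m' = m + 1) (j : ℕ) :
    pochC (-(m + m' : ℂ)) (2 * j) = 4 ^ j * pochC (-m) j * pochC (1 / 2 - m') j := by
  rw [pochC_two_mul]
  rcases h with rfl | rfl
  · ring_nf
  · push_cast
    ring_nf

lemma choose_mul_factorial_mul_pochC (k j : ℕ) :
    (k.choose j * j.factorial : ℂ) * pochC (k + 1) j = pochC (-(k + j : ℂ)) (2 * j) := by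
  have hsq : ((-1 : ℂ) ^ j) ^ 2 = 1 := by rw [← pow_mul, pow_mul']; norm_num
  rw [two_mul, pochC_add, pochC_eq_neg_one_pow_mul (-(k + j : ℂ)),
    show 1 - -(k + j : ℂ) - j = k + 1 by ring, show -(k + j : ℂ) + j = -k by ring,
    pochC_neg_natCast]
  linear_combination (-(k.choose j * j.factorial : ℂ) * pochC (k + 1) j) * hsq

theorem sum_range_succ_eq_sum_reflect {M : Type*} [AddCommMonoid M] {f : ℕ → M} {m n : ℕ}
    (hmn : m ≤ n) (h : ∀ j, m < j → j ≤ n → f (n - j) = 0) :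
    ∑ k ∈ range (n + 1), f k = ∑ j ∈ range (m + 1), f (n - j) := by
  rw [← sum_range_reflect f, eq_comm]
  refine sum_subset (range_subset_range.mpr (by omega)) fun j hj hjm => ?_
  exact h j (by simpa using hjm) (mem_range_succ_iff.mp hj)

-- The summand of `pochC_mul_pochC_eq_sum` at `k = n - j`, where `n = j + l + m'`, `m = j + l`.
lemma quadratic_term_eq_saalschutz_term {a b : ℂ} {j l m' : ℕ} (h : m' = j + l ∨ m' = j + l + 1) :
    4 ^ (l + m') * pochC (a / 2) (l + m') * pochC (b / 2) (l + m') *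
      ((-1) ^ j * (l + m').choose j) * pochC ((a + b + 1) / 2 + (l + m' : ℕ)) j *
      pochC ((l + m' : ℕ) + 1) j =
    4 ^ (j + l + m') * pochC (a / 2) m' * pochC (b / 2) m' * (-1) ^ (j + l) *
      ((j + l).choose j * pochC (1 / 2 - m') j * pochC (1 - (a + b + 1) / 2 - (j + l + m' : ℕ)) j *
        pochC (1 - a / 2 - (j + l + m' : ℕ) + j) l * pochC (b / 2 + m') l) := by
  have hA : pochC (a / 2) (l + m') =
      pochC (a / 2) m' * ((-1) ^ l * pochC (1 - a / 2 - (j + l + m' : ℕ) + j) l) := by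
    rw [add_comm l m', pochC_add, pochC_eq_neg_one_pow_mul (a / 2 + m')]
    push_cast
    ring_nf
  have hB : pochC (b / 2) (l + m') = pochC (b / 2) m' * pochC (b / 2 + m') l := by
    rw [add_comm l m', pochC_add]
  have hC : pochC ((a + b + 1) / 2 + (l + m' : ℕ)) j =
      (-1) ^ j * pochC (1 - (a + b + 1) / 2 - (j + l + m' : ℕ)) j := by
    rw [pochC_eq_neg_one_pow_mul]
    push_cast
    ring_nf
  have hQ : (-1) ^ j * ((l + m').choose j : ℂ) * pochC ((l + m' : ℕ) + 1) j =
      4 ^ j * ((j + l).choose j * pochC (1 / 2 - m') j) := by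
    have hfac : (j.factorial : ℂ) ≠ 0 := by exact_mod_cast j.factorial_ne_zero
    have hsq : ((-1 : ℂ) ^ j) ^ 2 = 1 := by rw [← pow_mul, pow_mul']; norm_num
    have key := choose_mul_factorial_mul_pochC (l + m') j
    rw [show ((l + m' : ℕ) : ℂ) + j = (j + l : ℕ) + m' by push_cast; ring,
      pochC_neg_add_two_mul (by omega), pochC_neg_natCast] at key
    apply mul_right_cancel₀ hfac
    linear_combination (-1) ^ j * key +
      4 ^ j * (j + l).choose j * j.factorial * pochC (1 / 2 - m') j * hsq
  rw [hA, hB, hC]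
  linear_combination (4 ^ (l + m') * pochC (a / 2) m' * pochC (b / 2) m' * (-1) ^ (j + l) *
    pochC (1 - (a + b + 1) / 2 - (j + l + m' : ℕ)) j * pochC (1 - a / 2 - (j + l + m' : ℕ) + j) l *
    pochC (b / 2 + m') l) * hQ

theorem pochC_mul_pochC_eq_sum (a b : ℂ) (n : ℕ) :
    pochC a n * pochC b n = ∑ k ∈ range (n + 1), 4 ^ k * pochC (a / 2) k * pochC (b / 2) k *
      ((-1) ^ (n - k) * k.choose (n - k)) * pochC ((a + b + 1) / 2 + k) (n - k) *
      pochC (k + 1) (n - k) := by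
  obtain ⟨m, m', hm', rfl⟩ : ∃ m m', (m' = m ∨ m' = m + 1) ∧ n = m + m' :=
    ⟨n / 2, n - n / 2, by omega, by omega⟩
  set f : ℕ → ℂ := fun k => 4 ^ k * pochC (a / 2) k * pochC (b / 2) k *
      ((-1) ^ (m + m' - k) * k.choose (m + m' - k)) * pochC ((a + b + 1) / 2 + k) (m + m' - k) *
      pochC (k + 1) (m + m' - k)
  set α : ℂ := 1 / 2 - m'
  set β : ℂ := 1 - (a + b + 1) / 2 - (m + m' : ℕ)
  set γ : ℂ := 1 - a / 2 - (m + m' : ℕ)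
  have hterm : ∀ j ∈ range (m + 1), f (m + m' - j) =
      4 ^ (m + m') * pochC (a / 2) m' * pochC (b / 2) m' * (-1) ^ m *
        (m.choose j * pochC α j * pochC β j * pochC (γ + j) (m - j) *
          pochC (γ - α - β) (m - j)) := by
    intro j hj
    obtain ⟨l, rfl⟩ := Nat.exists_eq_add_of_le (mem_range_succ_iff.mp hj)
    have hγαβ : γ - α - β = b / 2 + m' := by simp only [α, β, γ]; push_cast; ring
    simp only [f, show j + l + m' - j = l + m' by omega, show j + l + m' - (l + m') = j by omega,
      Nat.add_sub_cancel_left, hγαβ]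
    exact quadratic_term_eq_saalschutz_term hm'
  have hvanish : ∀ j, m < j → j ≤ m + m' → f (m + m' - j) = 0 := fun j hj hjn => by
    simp [f, Nat.choose_eq_zero_of_lt (show m + m' - j < m + m' - (m + m' - j) by omega)]
  have hdup (x : ℂ) := pochC_add_eq_two_pow_mul x hm'
  have hreflect : (-1) ^ m * pochC (γ - α) m = pochC ((a + 1) / 2) m := by
    rw [pochC_eq_neg_one_pow_mul (γ - α), ← mul_assoc, ← mul_pow]
    simp only [α, γ]
    push_cast
    ring_nf
  calc pochC a (m + m') * pochC b (m + m')
      = 4 ^ (m + m') * pochC (a / 2) m' * pochC (b / 2) m' * (-1) ^ m *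
          (pochC (γ - α) m * pochC (γ - β) m) := by
        rw [hdup, hdup, show γ - β = (b + 1) / 2 by simp only [β, γ]; ring, ← hreflect,
          show (4 : ℂ) = 2 ^ 2 by norm_num, ← pow_mul]
        ring
    _ = ∑ j ∈ range (m + 1), f (m + m' - j) := by
        rw [pochC_sub_mul_pochC_sub_eq_sum, mul_sum]
        exact (sum_congr rfl hterm).symm
    _ = ∑ k ∈ range (m + m' + 1), f k := (sum_range_succ_eq_sum_reflect (by omega) hvanish).symm

theorem pochC_mul_pochC_div_eq_sum {a b : ℂ} {n : ℕ} (h : pochC ((a + b + 1) / 2) n ≠ 0) :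
    pochC a n * pochC b n / (pochC ((a + b + 1) / 2) n * n.factorial) =
      ∑ k ∈ range (n + 1), pochC (a / 2) k * pochC (b / 2) k /
        (pochC ((a + b + 1) / 2) k * k.factorial) *
          (4 ^ k * ((-1) ^ (n - k) * k.choose (n - k))) := by
  rw [pochC_mul_pochC_eq_sum, sum_div]
  refine sum_congr rfl fun k hk => ?_
  obtain ⟨l, rfl⟩ := Nat.exists_eq_add_of_le (mem_range_succ_iff.mp hk)
  have hc := pochC_add ((a + b + 1) / 2) k l
  have hfac : (k.factorial : ℂ) * pochC (k + 1) l = (k + l).factorial :=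
    factorial_mul_ascPochhammer ℂ k l
  have hck : pochC ((a + b + 1) / 2) k ≠ 0 := pochC_ne_zero_of_le h (Nat.le_add_right k l)
  have hcl : pochC ((a + b + 1) / 2 + k) l ≠ 0 := right_ne_zero_of_mul (hc ▸ h)
  have hkl : pochC (k + 1) l ≠ 0 := right_ne_zero_of_mul (a := (k.factorial : ℂ)) <| by
    rw [hfac]; exact_mod_cast (k + l).factorial_ne_zero
  rw [Nat.add_sub_cancel_left, hc, ← hfac]
  generalize pochC ((a + b + 1) / 2 + k) l = P at hcl ⊢
  field_simp

theorem sum_choose_mul_pochC_div_pochC (D E : ℂ) {k N : ℕ} (hN : k < N)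
    (h : pochC E (2 * k) ≠ 0) :
    ∑ i ∈ range N, (-1) ^ i * k.choose i * (pochC D (k + i) / pochC E (k + i)) =
      pochC D k * pochC (E - D) k / pochC E (2 * k) := by
  rw [← sum_subset (range_subset_range.mpr hN) fun i _ hi => by
      simp [Nat.choose_eq_zero_of_lt (by simpa using hi : k < i)],
    show E - D = (E + k) - (D + k) by ring, pochC_sub_eq_sum_choose, mul_sum, sum_div]
  refine sum_congr rfl fun i hi => ?_
  have hi : i ≤ k := mem_range_succ_iff.mp hi
  have hE : pochC E (k + i) * pochC (E + k + i) (k - i) = pochC E (2 * k) := by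
    rw [add_assoc, ← Nat.cast_add, ← pochC_add]
    congr 1
    omega
  have hEi : pochC E (k + i) ≠ 0 := left_ne_zero_of_mul (hE ▸ h)
  have hEk : pochC (E + k + i) (k - i) ≠ 0 := right_ne_zero_of_mul (hE ▸ h)
  rw [pochC_add D k i, ← hE]
  generalize pochC (E + k + i) (k - i) = P at hEk ⊢
  field_simp

/-- **Quadratic transformation, even case** (formula (6.C1) of the paper, after
Krattenthaler–Rao): for `A = −2p` an even nonpositive integer,
`₃F₂[A, B, D; (A+B+1)/2, E | 1]
  = ₄F₃[A/2, B/2, E−D, D; (A+B+1)/2, E/2, (E+1)/2 | 1]`. -/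
theorem quadratic_transformation_even (p : ℕ) (B D E : ℂ)
    (h1 : pochC ((-(2*(p:ℂ)) + B + 1)/2) (2*p) ≠ 0)
    (h2 : pochC E (2*p) ≠ 0) :
    ∑ n ∈ Finset.range (2*p+1),
      (pochC (-(2*(p:ℂ))) n * pochC B n * pochC D n) /
      (pochC ((-(2*(p:ℂ)) + B + 1)/2) n * pochC E n * (Nat.factorial n : ℂ))
    = ∑ n ∈ Finset.range (p+1),
      (pochC (-(p:ℂ)) n * pochC (B/2) n * pochC (E - D) n * pochC D n) /
      (pochC ((-(2*(p:ℂ)) + B + 1)/2) n * pochC (E/2) n * pochC ((E+1)/2) n *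
        (Nat.factorial n : ℂ)) := by
  set c : ℂ := (-(2 * (p : ℂ)) + B + 1) / 2
  set u : ℕ → ℂ := fun k => pochC (-(p : ℂ)) k * pochC (B / 2) k / (pochC c k * k.factorial)
  set g : ℕ → ℕ → ℂ := fun k i =>
    u k * 4 ^ k * ((-1) ^ i * k.choose i * (pochC D (k + i) / pochC E (k + i)))
  have expand : ∀ n ∈ range (2 * p + 1),
      pochC (-(2 * (p : ℂ))) n * pochC B n * pochC D n / (pochC c n * pochC E n * n.factorial) =
        ∑ k ∈ range (n + 1), g k (n - k) := by
    intro n hn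
    rw [mul_right_comm (pochC c n), mul_div_mul_comm,
      pochC_mul_pochC_div_eq_sum (pochC_ne_zero_of_le h1 (mem_range_succ_iff.mp hn)),
      show -(2 * (p : ℂ)) / 2 = -p by ring, sum_mul]
    refine sum_congr rfl fun k hk => ?_
    simp only [g, u, Nat.add_sub_cancel' (mem_range_succ_iff.mp hk)]
    ring
  have inner : ∀ k ∈ range (p + 1), ∑ i ∈ range (2 * p + 1 - k), g k i =
      pochC (-(p : ℂ)) k * pochC (B / 2) k * pochC (E - D) k * pochC D k /
        (pochC c k * pochC (E / 2) k * pochC ((E + 1) / 2) k * k.factorial) := by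
    intro k hk
    have hk : k ≤ p := mem_range_succ_iff.mp hk
    rw [← mul_sum,
      sum_choose_mul_pochC_div_pochC D E (by omega) (pochC_ne_zero_of_le h2 (by omega)),
      pochC_two_mul]
    field_simp
    ring
  calc _ = ∑ n ∈ range (2 * p + 1), ∑ k ∈ range (n + 1), g k (n - k) := sum_congr rfl expand
    _ = ∑ k ∈ range (2 * p + 1), ∑ i ∈ range (2 * p + 1 - k), g k i := sum_range_diag_flip _ _
    _ = ∑ k ∈ range (p + 1), ∑ i ∈ range (2 * p + 1 - k), g k i := by
        refine (sum_subset (range_subset_range.mpr (by omega)) fun k _ hk => ?_).symm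
        simp [g, u, pochC_neg_natCast_of_lt (by simpa using hk : p < k)]
    _ = _ := sum_congr rfl inner
end
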